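/- arXiv:1402.1612 — 2 statements merged into one kernel-verified Lean document; each statement's English description precedes it below -/
import Mathlib

section
/- Let E be a group and C ≥ 1 a natural number such that every finite subgroup G of E contains an abelian subgroup A with index [G : A] ≤ C. Then every finite nonabelian simple subgroup of E has order at most C! (the factorial of C). In particular, a Jordan group contains only finitely many finite nonabelian simple subgroups up to isomorphism. -/
/-!
A simple nonabelian group `G` acts faithfully on the cosets of any proper subgroup, since the
kernel of that action is a proper normal subgroup. Taking an abelian subgroup of index at most
`C`, which is proper because `G` is nonabelian, embeds `G` into a symmetric group of degree at
most `C`.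
-/

open Nat

namespace Subgroup

variable {G : Type*} [Group G]

theorem index_normalCore_dvd_factorial_index (H : Subgroup G) [H.FiniteIndex] :
    H.normalCore.index ∣ H.index ! := by
  rw [H.normalCore_eq_ker, index_ker, H.index_eq_card, ← Nat.card_perm]
  exact card_subgroup_dvd_card _

theorem card_le_factorial_index_of_normalCore_eq_bot [Finite G] {H : Subgroup G}
    (hH : H.normalCore = ⊥) : Nat.card G ≤ H.index ! := by
  rw [← index_bot, ← hH]
  exact Nat.le_of_dvd (factorial_pos _) H.index_normalCore_dvd_factorial_index

theorem normalCore_eq_bot_of_ne_top [IsSimpleGroup G] {H : Subgroup G} (hH : H ≠ ⊤) :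
    H.normalCore = ⊥ :=
  (IsSimpleGroup.eq_bot_or_eq_top_of_normal _ H.normalCore_normal).resolve_right
    fun h => hH <| top_unique (h ▸ H.normalCore_le)

theorem ne_top_of_isMulCommutative (hG : ¬ ∀ x y : G, x * y = y * x) {H : Subgroup G}
    [IsMulCommutative H] : H ≠ ⊤ := by
  rintro rfl
  exact hG fun x y => congrArg Subtype.val
    (IsMulCommutative.is_comm.comm (⟨x, mem_top x⟩ : (⊤ : Subgroup G)) ⟨y, mem_top y⟩)

end Subgroup

theorem card_le_factorial_of_simple_nonabelian_of_jordan_bound_general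
    (E : Type*) [Group E] (C : ℕ)
    (hJordan : ∀ G : Subgroup E, Finite G →
      ∃ A : Subgroup G, IsMulCommutative A ∧ A.index ≤ C)
    (G : Subgroup E) (hG : Finite G) (hsimple : IsSimpleGroup G)
    (hnonab : ¬ ∀ x y : G, x * y = y * x) :
    Nat.card G ≤ Nat.factorial C := by
  obtain ⟨A, hA_comm, hA_index⟩ := hJordan G hG
  have hA_core : A.normalCore = ⊥ :=
    Subgroup.normalCore_eq_bot_of_ne_top (Subgroup.ne_top_of_isMulCommutative hnonab)
  exact (Subgroup.card_le_factorial_index_of_normalCore_eq_bot hA_core).trans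
    (factorial_le hA_index)

/-- If every finite subgroup of `E` has an abelian subgroup of index at most `C ≥ 1`, then
every finite nonabelian simple subgroup of `E` has order at most `C!`. In particular, a
Jordan group contains only finitely many finite nonabelian simple subgroups up to
isomorphism. -/
theorem card_le_factorial_of_simple_nonabelian_of_jordan_bound
    (E : Type*) [Group E] (C : ℕ) (hC : 1 ≤ C)
    (hJordan : ∀ G : Subgroup E, Finite G →
      ∃ A : Subgroup G, IsMulCommutative A ∧ A.index ≤ C)
    (G : Subgroup E) (hG : Finite G) (hsimple : IsSimpleGroup G)
    (hnonab : ¬ ∀ x y : G, x * y = y * x) :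
    Nat.card G ≤ Nat.factorial C :=
  card_le_factorial_of_simple_nonabelian_of_jordan_bound_general E C hJordan G hG hsimple hnonab
end

section
/- Let m ≥ 3, let D be the dihedral group of order 2^m (the dihedral group DihedralGroup (2^(m-1)) on a cyclic group of order 2^(m-1) ≥ 4), let Q be a finite abelian group of odd order, and let φ : Q → Aut(D) be a group homomorphism. Then the semidirect product G = D ⋊_φ Q contains an abelian subgroup of index at most 2. -/
/-!
An automorphism `σ` of `DihedralGroup n` (`n ≥ 3`) sends `r 1`, of order `n ≠ 2`, to a rotation
`r j`, so it acts on rotations as multiplication by `j`. If `σ ^ N = 1` with `N` coprime to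
`φ(n) = #(ZMod n)ˣ`, then `j ^ N = 1` forces `j = 1`; for `n = 2 ^ (m - 1)`, `φ(n)` is a power of
two, so every automorphism of odd order fixes all rotations. Then the sign of the left component is
a homomorphism on `D ⋊[φ] Q`, and its kernel, the rotations times `Q`, is abelian of index `2`.
-/

namespace SemidirectProduct

variable {N G H : Type*} [Group N] [Group G] [Group H] {φ : G →* MulAut N}

def liftLeft (f : N →* H) (hf : ∀ g n, f (φ g n) = f n) : N ⋊[φ] G →* H :=
  lift f 1 fun g => by ext n; simp [hf]

@[simp]
theorem liftLeft_apply (f : N →* H) (hf : ∀ g n, f (φ g n) = f n) (x : N ⋊[φ] G) :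
    liftLeft f hf x = f x.left := by
  simp [liftLeft, lift]

theorem isMulCommutative_ker_liftLeft [IsMulCommutative G] (f : N →* H)
    (hf : ∀ g n, f (φ g n) = f n) [IsMulCommutative f.ker] (hfix : ∀ g, ∀ n ∈ f.ker, φ g n = n) :
    IsMulCommutative (liftLeft f hf).ker := by
  refine ⟨⟨fun ⟨x, hx⟩ ⟨y, hy⟩ => Subtype.ext ?_⟩⟩
  have hx' : x.left ∈ f.ker := by simpa using hx
  have hy' : y.left ∈ f.ker := by simpa using hy
  have hleft : x.left * y.left = y.left * x.left :=
    congrArg Subtype.val (mul_comm' (⟨x.left, hx'⟩ : f.ker) ⟨y.left, hy'⟩)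
  ext
  · simp [hfix _ _ hx', hfix _ _ hy', hleft]
  · exact mul_comm' x.right y.right

end SemidirectProduct

namespace DihedralGroup

variable {n : ℕ}

def sign (n : ℕ) : DihedralGroup n →* ℤˣ where
  toFun
    | r _ => 1
    | sr _ => -1
  map_one' := rfl
  map_mul' := by rintro (i | i) (j | j) <;> simp

@[simp]
theorem sign_r (i : ZMod n) : sign n (r i) = 1 := rfl

@[simp]
theorem sign_sr (i : ZMod n) : sign n (sr i) = -1 := rfl

theorem mem_ker_sign {x : DihedralGroup n} : x ∈ (sign n).ker ↔ ∃ i, x = r i := by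
  cases x <;> simp [MonoidHom.mem_ker]

instance : IsMulCommutative (sign n).ker := by
  refine ⟨⟨fun ⟨x, hx⟩ ⟨y, hy⟩ => Subtype.ext ?_⟩⟩
  obtain ⟨i, rfl⟩ := mem_ker_sign.mp hx
  obtain ⟨j, rfl⟩ := mem_ker_sign.mp hy
  simp [add_comm]

theorem sign_apply_of_forall_apply_r (σ : MulAut (DihedralGroup n)) (hσ : ∀ i, σ (r i) = r i)
    (x : DihedralGroup n) : sign n (σ x) = sign n x := by
  rcases x with i | i
  · rw [hσ]
  · rcases h : σ (sr i) with j | j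
    · rw [← hσ j, σ.apply_eq_iff_eq] at h
      cases h
    · rfl

theorem exists_mulAut_apply_r (hn : 2 < n) (σ : MulAut (DihedralGroup n)) :
    ∃ j : ZMod n, ∀ i, σ (r i) = r (j * i) := by
  have : NeZero n := ⟨by omega⟩
  obtain ⟨j, hj⟩ : ∃ j, σ (r 1) = r j := by
    have horder : orderOf (σ (r 1)) = n := by rw [MulEquiv.orderOf_eq, orderOf_r_one]
    rcases h : σ (r 1) with j | j
    · exact ⟨j, rfl⟩
    · rw [h, orderOf_sr] at horder
      omega
  refine ⟨j, fun i => ?_⟩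
  rw [← ZMod.natCast_zmod_val i, ← r_one_pow, map_pow, hj, r_pow]

theorem mulAut_pow_apply_r {σ : MulAut (DihedralGroup n)} {j : ZMod n}
    (hσ : ∀ i, σ (r i) = r (j * i)) (k : ℕ) (i : ZMod n) : (σ ^ k) (r i) = r (j ^ k * i) := by
  induction k generalizing i with
  | zero => simp
  | succ k ih => rw [pow_succ, MulAut.mul_apply, hσ, ih, pow_succ, mul_assoc]

theorem mulAut_apply_r_of_pow_eq_one (hn : 2 < n) {σ : MulAut (DihedralGroup n)} {N : ℕ}
    (hσ : σ ^ N = 1) (hN : N.Coprime n.totient) (i : ZMod n) : σ (r i) = r i := by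
  have : NeZero n := ⟨by omega⟩
  obtain ⟨j, hj⟩ := exists_mulAut_apply_r hn σ
  have hjN : j ^ N = 1 := by simpa [hσ] using (mulAut_pow_apply_r hj N 1).symm
  have hN0 : N ≠ 0 := by
    rintro rfl
    rw [Nat.coprime_zero_left, Nat.totient_eq_one_iff] at hN
    omega
  obtain ⟨u, rfl⟩ := IsUnit.of_pow_eq_one hjN hN0
  have hcard : (Nat.card (ZMod n)ˣ).Coprime N := by
    rw [Nat.card_eq_fintype_card, ZMod.card_units_eq_totient]
    exact hN.symm
  have hu : u = 1 :=
    (Nat.Coprime.pow_left_bijective hcard).injective (by ext; simpa using hjN)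
  rw [hj, hu, Units.val_one, one_mul]

end DihedralGroup

open DihedralGroup in
theorem dihedral_semidirect_odd_abelian_index_le_two_general
    (m : ℕ) (hm : 3 ≤ m)
    (Q : Type*) [CommGroup Q] (hQ : Odd (Nat.card Q))
    (φ : Q →* MulAut (DihedralGroup (2 ^ (m - 1)))) :
    ∃ A : Subgroup ((DihedralGroup (2 ^ (m - 1))) ⋊[φ] Q),
      IsMulCommutative A ∧ A.index ≤ 2 := by
  have hn : 2 < 2 ^ (m - 1) :=
    calc 2 < 2 ^ 2 := by norm_num
      _ ≤ 2 ^ (m - 1) := Nat.pow_le_pow_right two_pos (by omega)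
  have hcop : (Nat.card Q).Coprime (2 ^ (m - 1)).totient := by
    rw [Nat.totient_prime_pow Nat.prime_two (by omega)]
    simpa using Nat.Coprime.pow_right (m - 1 - 1) (Nat.coprime_two_right.mpr hQ)
  have hfix : ∀ q i, φ q (r i) = r i := fun q =>
    mulAut_apply_r_of_pow_eq_one hn (by rw [← map_pow, pow_card_eq_one', map_one]) hcop
  let F := SemidirectProduct.liftLeft (sign _) fun q => sign_apply_of_forall_apply_r _ (hfix q)
  refine ⟨F.ker, ?_, ?_⟩
  · refine SemidirectProduct.isMulCommutative_ker_liftLeft _ _ fun q x hx => ?_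
    obtain ⟨i, rfl⟩ := mem_ker_sign.mp hx
    exact hfix q i
  · calc F.ker.index = Nat.card F.range := Subgroup.index_ker F
      _ ≤ Nat.card ℤˣ := Subgroup.card_le_card_group _
      _ = 2 := by simp

/-- If D is the dihedral group of order 2^m with m ≥ 3 and Q is a finite abelian group of
odd order acting on D via φ : Q → Aut(D), then the semidirect product D ⋊_φ Q contains an
abelian subgroup of index at most 2. -/
theorem dihedral_semidirect_odd_abelian_index_le_two
    (m : ℕ) (hm : 3 ≤ m)
    (Q : Type*) [CommGroup Q] [Finite Q] (hQ : Odd (Nat.card Q))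
    (φ : Q →* MulAut (DihedralGroup (2 ^ (m - 1)))) :
    ∃ A : Subgroup ((DihedralGroup (2 ^ (m - 1))) ⋊[φ] Q),
      IsMulCommutative A ∧ A.index ≤ 2 :=
  dihedral_semidirect_odd_abelian_index_le_two_general m hm Q hQ φ
end
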